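/- arXiv:1704.02761 — 3 statements merged into one kernel-verified Lean document; each statement's English description precedes it below -/
import Mathlib

section
/- Let a_0, a_1, a_2, ... be i.i.d. complex random variables such that |a_0| is not almost surely constant and ℙ(a_0 = 0) = 0. Then there exist constants C_1 > 0, r > 0 and A > 0, depending only on the distribution of |a_0|, such that for every integer n ≥ 1 and every t with 0 < t < C_1, the smallest root modulus x_1^(n) of P_n(z) = ∑_{k=0}^n a_k z^k satisfies ℙ(x_1^(n) ≤ t) ≥ A · ℙ(|a_0| ≤ r t / 2). -/
/-!
If some coefficient `a_j`, `j ≥ 1`, dominates on the circle `|z| = t`, in the sense that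
`|a₀| + ∑_{k ≠ j} |a_k| t^k < |a_j| t^j`, the maximum modulus principle applied to `1 / P_n`
puts a root in the closed disc of radius `t`. With `σ = t^{-1/2}`, the coefficient `a_{j+1}`
dominates as soon as `|a₀| ≤ r t / 2`, `|a_{j+1}| > v_j ≥ (r + 2L) σ^{2j}` and
`|a_{i+1}| ≤ L σ^i` for all `i ≠ j`. For distinct `j` these events are disjoint, and by
independence each has probability `ℙ(|a₀| ≤ r t / 2) · G(v_j) · ∏_{i ≠ j} (1 - G(L σ^i))`,
where `G` is the tail of `|a₀|`.

No moment of `|a₀|` is assumed, so the scale `L` has to depend on `n`: it is read off the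
threshold `Y` at which `∑_{i < n} G(y σ^i)` falls below `1 / 8`. Either `G(Y / 8) ≤ 3 / 4`, and
all indices together carry dominance probability at least `1 / 16`, or `a₁` alone dominates with
probability at least `1 / 4`.
-/

open MeasureTheory ProbabilityTheory Polynomial Filter

/-- The random Kac polynomial `P_n(z) = ∑_{k=0}^n a_k z^k`. -/
noncomputable def kacPoly {Ω : Type*} (a : ℕ → Ω → ℂ) (n : ℕ) (ω : Ω) : Polynomial ℂ :=
  ∑ k ∈ Finset.range (n + 1), Polynomial.C (a k ω) * Polynomial.X ^ k

/-- The smallest modulus of a root of a complex polynomial. -/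
noncomputable def minRootMod (p : Polynomial ℂ) : ℝ :=
  sInf ((fun z : ℂ => ‖z‖) '' {z : ℂ | z ∈ p.roots})

/-- The largest modulus of a root of a complex polynomial. -/
noncomputable def maxRootMod (p : Polynomial ℂ) : ℝ :=
  sSup ((fun z : ℂ => ‖z‖) '' {z : ℂ | z ∈ p.roots})

open Metric Finset Set Topology

theorem exists_isRoot_norm_le_of_norm_eval_zero_lt {p : ℂ[X]} {t Δ : ℝ} (ht : 0 < t)
    (h0 : ‖p.eval 0‖ < Δ) (hsphere : ∀ z : ℂ, ‖z‖ = t → Δ ≤ ‖p.eval z‖) :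
    ∃ z : ℂ, ‖z‖ ≤ t ∧ p.IsRoot z := by
  by_contra! hne
  have hne' : ∀ z ∈ closedBall (0 : ℂ) t, p.eval z ≠ 0 := fun z hz =>
    hne z (mem_closedBall_zero_iff.mp hz)
  have hΔ : 0 < Δ := (norm_nonneg _).trans_lt h0
  have hinv : DiffContOnCl ℂ (fun z => (p.eval z)⁻¹) (ball 0 t) := by
    refine ⟨fun z hz => ((p.differentiable z).inv (hne' z (ball_subset_closedBall hz)))
      |>.differentiableWithinAt, ?_⟩
    rw [closure_ball 0 ht.ne']
    exact p.continuous.continuousOn.inv₀ hne'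
  have hmax := Complex.norm_le_of_forall_mem_frontier_norm_le isBounded_ball hinv
    (fun z hz => by
      rw [frontier_ball 0 ht.ne', mem_sphere_zero_iff_norm] at hz
      rw [norm_inv]
      exact inv_anti₀ hΔ (hsphere z hz))
    (subset_closure (mem_ball_self ht))
  rw [norm_inv] at hmax
  have := (inv_le_inv₀ (norm_pos_iff.mpr (hne' 0 (mem_closedBall_self ht.le))) hΔ).mp hmax
  linarith

theorem exists_isRoot_norm_le_of_dominant_coeff {p : ℂ[X]} {n j : ℕ} (hn : p.natDegree ≤ n)
    {t : ℝ} (ht : 0 < t)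
    (hdom : ‖p.coeff 0‖ + ∑ k ∈ (range (n + 1)).erase j, ‖p.coeff k‖ * t ^ k
      < ‖p.coeff j‖ * t ^ j) :
    ∃ z : ℂ, ‖z‖ ≤ t ∧ p.IsRoot z := by
  have hsum_nonneg : 0 ≤ ∑ k ∈ (range (n + 1)).erase j, ‖p.coeff k‖ * t ^ k := by positivity
  have hj : j ∈ range (n + 1) := by
    have : p.coeff j ≠ 0 := by
      intro h
      rw [h, norm_zero, zero_mul] at hdom
      linarith [norm_nonneg (p.coeff 0)]
    exact mem_range.mpr (Nat.lt_succ_of_le ((le_natDegree_of_ne_zero this).trans hn))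
  refine exists_isRoot_norm_le_of_norm_eval_zero_lt ht (Δ := ‖p.coeff j‖ * t ^ j -
    ∑ k ∈ (range (n + 1)).erase j, ‖p.coeff k‖ * t ^ k) ?_ fun z hz => ?_
  · rw [← coeff_zero_eq_eval_zero]
    linarith
  · rw [eval_eq_sum_range' (Nat.lt_succ_of_le hn), ← add_sum_erase _ _ hj]
    have hrest : ‖∑ k ∈ (range (n + 1)).erase j, p.coeff k * z ^ k‖
        ≤ ∑ k ∈ (range (n + 1)).erase j, ‖p.coeff k‖ * t ^ k :=
      (norm_sum_le _ _).trans_eq (sum_congr rfl fun k _ => by rw [norm_mul, norm_pow, hz])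
    have hlead : ‖p.coeff j * z ^ j‖ = ‖p.coeff j‖ * t ^ j := by rw [norm_mul, norm_pow, hz]
    have := norm_sub_norm_le (p.coeff j * z ^ j)
      (-∑ k ∈ (range (n + 1)).erase j, p.coeff k * z ^ k)
    rw [sub_neg_eq_add, norm_neg] at this
    linarith

theorem minRootMod_le_of_isRoot {p : ℂ[X]} (hp : p ≠ 0) {z : ℂ} (hz : p.IsRoot z) :
    minRootMod p ≤ ‖z‖ :=
  csInf_le ⟨0, fun _ ⟨w, _, hw⟩ => hw ▸ norm_nonneg w⟩ ⟨z, (mem_roots hp).mpr hz, rfl⟩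

theorem minRootMod_le_of_dominant_coeff {p : ℂ[X]} {n j : ℕ} (hn : p.natDegree ≤ n)
    {t : ℝ} (ht : 0 < t)
    (hdom : ‖p.coeff 0‖ + ∑ k ∈ (range (n + 1)).erase j, ‖p.coeff k‖ * t ^ k
      < ‖p.coeff j‖ * t ^ j) :
    minRootMod p ≤ t := by
  obtain ⟨z, hzt, hz⟩ := exists_isRoot_norm_le_of_dominant_coeff hn ht hdom
  have hp : p ≠ 0 := by
    rintro rfl
    simp only [coeff_zero, norm_zero, zero_mul, sum_const_zero, add_zero] at hdom
    exact lt_irrefl _ hdom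
  exact (minRootMod_le_of_isRoot hp hz).trans hzt

theorem coeff_kacPoly {Ω : Type*} (a : ℕ → Ω → ℂ) {n k : ℕ} (hk : k ≤ n) (ω : Ω) :
    (kacPoly a n ω).coeff k = a k ω := by
  simp [kacPoly, Nat.lt_succ_of_le hk]

theorem natDegree_kacPoly_le {Ω : Type*} (a : ℕ → Ω → ℂ) (n : ℕ) (ω : Ω) :
    (kacPoly a n ω).natDegree ≤ n :=
  natDegree_sum_le_of_forall_le _ _ fun _ hk =>
    (natDegree_C_mul_X_pow_le _ _).trans (Nat.le_of_lt_succ (mem_range.mp hk))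

theorem one_sub_sum_le_prod_one_sub {ι R : Type*} [CommRing R] [PartialOrder R]
    [IsOrderedRing R] (s : Finset ι) {x : ι → R} (h0 : ∀ i ∈ s, 0 ≤ x i)
    (h1 : ∀ i ∈ s, x i ≤ 1) :
    1 - ∑ i ∈ s, x i ≤ ∏ i ∈ s, (1 - x i) := by
  classical
  induction s using Finset.induction_on with
  | empty => simp
  | insert c s hc ih =>
    rw [sum_insert hc, prod_insert hc]
    have hc0 := h0 c (mem_insert_self c s)
    have hc1 : 0 ≤ 1 - x c := sub_nonneg.mpr (h1 c (mem_insert_self c s))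
    have ih := ih (fun i hi => h0 i (mem_insert_of_mem hi))
      (fun i hi => h1 i (mem_insert_of_mem hi))
    have hs : 0 ≤ x c * ∑ i ∈ s, x i :=
      mul_nonneg hc0 (sum_nonneg fun i hi => h0 i (mem_insert_of_mem hi))
    calc 1 - (x c + ∑ i ∈ s, x i)
        ≤ 1 - (x c + ∑ i ∈ s, x i) + x c * ∑ i ∈ s, x i := le_add_of_nonneg_right hs
      _ = (1 - x c) * (1 - ∑ i ∈ s, x i) := by ring
      _ ≤ (1 - x c) * ∏ i ∈ s, (1 - x i) := mul_le_mul_of_nonneg_left ih hc1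

theorem sum_range_le_two_mul_sum_range_even {f : ℕ → ℝ} (hf : Antitone f) (hf0 : ∀ i, 0 ≤ f i)
    (n : ℕ) : ∑ i ∈ range n, f i ≤ 2 * ∑ i ∈ range n, f (2 * i) := by
  have hdouble : ∀ m, ∑ i ∈ range (2 * m), f i ≤ 2 * ∑ i ∈ range m, f (2 * i) := by
    intro m
    induction m with
    | zero => simp
    | succ m ih =>
      rw [show 2 * (m + 1) = 2 * m + 1 + 1 by ring, sum_range_succ, sum_range_succ,
        sum_range_succ]
      linarith [hf (Nat.le_succ (2 * m))]
  exact (sum_le_sum_of_subset_of_nonneg (range_subset_range.mpr (by omega))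
    fun i _ _ => hf0 i).trans (hdouble n)

theorem exists_threshold_of_antitone {α β : Type*} [ConditionallyCompleteLinearOrder α]
    [LinearOrder β] {f : α → β} (hf : Antitone f) {c : β}
    (hlow : ∃ y, c ≤ f y) (hhigh : ∃ y, f y < c) :
    ∃ Y, (∀ y, Y < y → f y < c) ∧ ∀ y < Y, c ≤ f y := by
  obtain ⟨y₁, hy₁⟩ := hhigh
  have hbdd : BddAbove {y | c ≤ f y} :=
    ⟨y₁, fun y hy => not_lt.mp fun h => (hy.trans (hf h.le)).not_gt hy₁⟩
  refine ⟨sSup {y | c ≤ f y}, fun y hy => not_le.mp fun h => (le_csSup hbdd h).not_gt hy,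
    fun y hy => ?_⟩
  obtain ⟨y', hy', hyy'⟩ := exists_lt_of_lt_csSup hlow hy
  exact le_trans hy' (hf hyy'.le)

theorem le_of_forall_gt_lt_of_forall_lt_le {α β : Type*} [LinearOrder α] [DenselyOrdered α]
    [Preorder β] {f : α → β} {c : β} {M Y : α} (hY : ∀ y, Y < y → f y < c)
    (hM : ∀ y < M, c ≤ f y) : M ≤ Y :=
  le_of_forall_lt_imp_le_of_dense fun y hy => not_lt.mp fun hYy => (hY y hYy).not_ge (hM y hy)

/-- For `G` the tail of `|a₀|`, `tailSum G σ n y` is the expected number of `i < n` with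
`|a_{i+1}| > y σ^i`. -/
def tailSum (G : ℝ → ℝ) (σ : ℝ) (n : ℕ) (y : ℝ) : ℝ :=
  ∑ i ∈ range n, G (y * σ ^ i)

section tailSum

variable {G : ℝ → ℝ} {σ : ℝ} {n : ℕ}

theorem tailSum_antitone (hG : Antitone G) (hσ : 0 ≤ σ) : Antitone (tailSum G σ n) :=
  fun _ _ hy => sum_le_sum fun i _ => hG (mul_le_mul_of_nonneg_right hy (pow_nonneg hσ i))

theorem le_tailSum (hG0 : ∀ u, 0 ≤ G u) (hn : n ≠ 0) (y : ℝ) : G y ≤ tailSum G σ n y := by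
  simpa [tailSum] using single_le_sum (f := fun i => G (y * σ ^ i)) (fun i _ => hG0 _)
    (mem_range.mpr (Nat.pos_of_ne_zero hn))

theorem tailSum_succ (m : ℕ) (y : ℝ) :
    tailSum G σ (m + 1) y = G y + tailSum G σ m (y * σ) := by
  simp only [tailSum, sum_range_succ', pow_succ, pow_zero, mul_one, mul_assoc, mul_comm σ]
  ring

theorem tailSum_mono (hG0 : ∀ u, 0 ≤ G u) {m : ℕ} (hmn : m ≤ n) (y : ℝ) :
    tailSum G σ m y ≤ tailSum G σ n y :=
  sum_le_sum_of_subset_of_nonneg (range_subset_range.mpr hmn) fun _ _ _ => hG0 _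

theorem tailSum_le_two_mul_tailSum_sq (hG : Antitone G) (hG0 : ∀ u, 0 ≤ G u) (hσ : 1 ≤ σ)
    {y : ℝ} (hy : 0 ≤ y) : tailSum G σ n y ≤ 2 * tailSum G (σ ^ 2) n y := by
  simp only [tailSum, ← pow_mul]
  exact sum_range_le_two_mul_sum_range_even
    (fun i j hij => hG (mul_le_mul_of_nonneg_left (pow_le_pow_right₀ hσ hij) hy))
    (fun _ => hG0 _) n

theorem tendsto_tailSum_atTop (hG : Tendsto G atTop (𝓝 0)) (hσ : 0 < σ) :
    Tendsto (tailSum G σ n) atTop (𝓝 0) := by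
  have := tendsto_finsetSum (range n) fun i _ =>
    hG.comp (tendsto_id.atTop_mul_const (pow_pos hσ i))
  rw [sum_const_zero] at this
  exact this

end tailSum

/-- Data for a family of disjoint events on each of which a single coefficient dominates.
Index `i < n` stands for the coefficient `a_{i+1}`: on the `j`-th event `|a_{j+1}| > v j` while
`|a_{i+1}| ≤ L σ^i` for `i ≠ j`. -/
structure DominantScale (G : ℝ → ℝ) (σ r : ℝ) (n : ℕ) where
  L : ℝ
  J : Finset ℕ
  v : ℕ → ℝ
  L_nonneg : 0 ≤ L
  J_subset : J ⊆ range n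
  lt_v : ∀ j ∈ J, L * σ ^ j < v j
  margin_le : ∀ j ∈ J, (r + 2 * L) * (σ ^ 2) ^ j ≤ v j
  sum_erase_le : ∀ j ∈ J, ∑ i ∈ (range n).erase j, G (L * σ ^ i) ≤ 7 / 8

section DominantScale

variable {G : ℝ → ℝ} {σ M Y : ℝ} {n : ℕ}

/-- All `n` coefficients are candidates for dominance; their probabilities add up to at least
`1 / 16`. -/
theorem exists_dominantScale_of_tail_le (hG : Antitone G) (hG0 : ∀ u, 0 ≤ G u) (hσ : 8 < σ)
    (hM : 0 < M) (hMY : M ≤ Y) (hn : n ≠ 0)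
    (hY : ∀ y, Y < y → tailSum G σ n y < 1 / 8) (hY' : ∀ y < Y, 1 / 8 ≤ tailSum G σ n y)
    (hGY : G (Y / 8) ≤ 3 / 4) :
    ∃ d : DominantScale G σ (M / 4) n, 1 / 16 ≤ ∑ j ∈ d.J, G (d.v j) := by
  obtain ⟨m, rfl⟩ := Nat.exists_eq_add_one_of_ne_zero hn
  have hYpos : 0 < Y := hM.trans_le hMY
  have hσ1 : 1 ≤ σ := by linarith
  refine ⟨⟨Y / 8, range (m + 1), fun j => Y / 2 * (σ ^ 2) ^ j, by positivity, subset_rfl,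
    fun j _ => ?_, fun j _ => ?_, fun j _ => ?_⟩, ?_⟩
  · calc Y / 8 * σ ^ j < Y / 2 * σ ^ j := by gcongr; linarith
      _ ≤ Y / 2 * (σ ^ 2) ^ j := by
        rw [← pow_mul]
        exact mul_le_mul_of_nonneg_left (pow_le_pow_right₀ hσ1 (by omega)) (by positivity)
  · gcongr; linarith
  · have hLσ : Y < Y / 8 * σ := by nlinarith
    calc ∑ i ∈ (range (m + 1)).erase j, G (Y / 8 * σ ^ i)
        ≤ tailSum G σ (m + 1) (Y / 8) :=
          sum_le_sum_of_subset_of_nonneg (erase_subset _ _) fun _ _ _ => hG0 _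
      _ = G (Y / 8) + tailSum G σ m (Y / 8 * σ) := tailSum_succ m _
      _ ≤ 3 / 4 + tailSum G σ (m + 1) (Y / 8 * σ) := by
          gcongr; exact tailSum_mono hG0 m.le_succ _
      _ ≤ 7 / 8 := by linarith [hY _ hLσ]
  · have h1 := hY' (Y / 2) (by linarith)
    have h2 := tailSum_le_two_mul_tailSum_sq (n := m + 1) hG hG0 hσ1 (y := Y / 2)
      (by positivity)
    change 1 / 16 ≤ tailSum G (σ ^ 2) (m + 1) (Y / 2)
    linarith

/-- Only `a₁` is a candidate for dominance, with probability at least `1 / 4`. -/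
theorem exists_dominantScale_of_lt_tail (hG : Antitone G) (hG0 : ∀ u, 0 ≤ G u)
    (hGtop : Tendsto G atTop (𝓝 0)) (hσ : 64 < σ) (hM : 0 < M) (hGM : ∀ u < M, 1 / 2 ≤ G u)
    (hn : n ≠ 0) (hY : ∀ y, Y < y → tailSum G σ n y < 1 / 8)
    (hGY : 3 / 4 < G (Y / 8)) :
    ∃ d : DominantScale G σ (M / 4) n, 1 / 4 ≤ ∑ j ∈ d.J, G (d.v j) := by
  obtain ⟨m, rfl⟩ := Nat.exists_eq_add_one_of_ne_zero hn
  obtain ⟨c, hc, hc'⟩ := exists_threshold_of_antitone hG (c := 1 / 4)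
    ⟨0, by linarith [hGM 0 hM]⟩ ((hGtop.eventually (gt_mem_nhds (by norm_num))).exists)
  have hMc : M ≤ c := le_of_forall_gt_lt_of_forall_lt_le hc fun u hu => by linarith [hGM u hu]
  have hYc : Y / 8 ≤ c :=
    le_of_forall_gt_lt_of_forall_lt_le hc fun u hu => by linarith [hG hu.le]
  have hcpos : 0 < c := hM.trans_le hMc
  have hmem : 0 ∈ range (m + 1) := mem_range.mpr m.succ_pos
  refine ⟨⟨c / 8, {0}, fun _ => c / 2, by positivity, singleton_subset_iff.mpr hmem,
    fun j hj => ?_, fun j hj => ?_, fun j hj => ?_⟩, ?_⟩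
  · obtain rfl := Finset.mem_singleton.mp hj
    simp only [pow_zero, mul_one]; linarith
  · obtain rfl := Finset.mem_singleton.mp hj
    simp only [pow_zero, mul_one]; linarith
  · obtain rfl := Finset.mem_singleton.mp hj
    have hLσ : Y < c / 8 * σ := by nlinarith
    have hsucc := tailSum_succ (G := G) (σ := σ) m (c / 8)
    rw [sum_erase_eq_sub hmem]
    change tailSum G σ (m + 1) (c / 8) - G (c / 8 * σ ^ 0) ≤ 7 / 8
    rw [pow_zero, mul_one]
    linarith [hY _ hLσ, tailSum_mono hG0 m.le_succ (c / 8 * σ) (G := G) (σ := σ)]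
  · rw [sum_singleton]
    exact hc' _ (by linarith)

theorem exists_dominantScale (hG : Antitone G) (hG0 : ∀ u, 0 ≤ G u)
    (hGtop : Tendsto G atTop (𝓝 0)) (hM : 0 < M) (hGM : ∀ u < M, 1 / 2 ≤ G u) (hn : n ≠ 0)
    (hσ : 64 < σ) :
    ∃ d : DominantScale G σ (M / 4) n, 1 / 16 ≤ ∑ j ∈ d.J, G (d.v j) := by
  have hlow : ∀ y < M, 1 / 8 ≤ tailSum G σ n y := fun y hy =>
    by linarith [hGM y hy, le_tailSum (σ := σ) hG0 hn y]
  obtain ⟨Y, hY, hY'⟩ := exists_threshold_of_antitone (tailSum_antitone hG (by linarith))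
    ⟨0, hlow 0 hM⟩
    (((tendsto_tailSum_atTop hGtop (by linarith)).eventually (gt_mem_nhds (by norm_num))).exists)
  have hMY : M ≤ Y := le_of_forall_gt_lt_of_forall_lt_le hY hlow
  rcases le_or_gt (G (Y / 8)) (3 / 4) with hGY | hGY
  · exact exists_dominantScale_of_tail_le hG hG0 (by linarith) hM hMY hn hY hY' hGY
  · obtain ⟨d, hd⟩ := exists_dominantScale_of_lt_tail hG hG0 hGtop hσ hM hGM hn hY hGY
    exact ⟨d, by linarith⟩

end DominantScale

section DominantEvent

variable {Ω : Type*}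

def dominantEvent (X : ℕ → Ω → ℝ) (n j : ℕ) (v : ℝ) (w : ℕ → ℝ) : Set Ω :=
  {ω | v < X (j + 1) ω ∧ ∀ i ∈ (range n).erase j, X (i + 1) ω ≤ w i}

theorem minRootMod_kacPoly_le_of_mem_dominantEvent {a : ℕ → Ω → ℂ} {G : ℝ → ℝ}
    {σ r t : ℝ} {n : ℕ} (d : DominantScale G σ r n) {j : ℕ} (hj : j ∈ d.J) (ht : 0 < t)
    (hσt : σ ^ 2 * t = 1) (hσ : 2 ≤ σ) {ω : Ω} (h0 : ‖a 0 ω‖ ≤ r * t / 2)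
    (hω : ω ∈ dominantEvent (fun k ω => ‖a k ω‖) n j (d.v j) fun i => d.L * σ ^ i) :
    minRootMod (kacPoly a n ω) ≤ t := by
  have hjn : j < n := Finset.mem_range.mp (d.J_subset hj)
  have hcoeff : ∀ k ∈ range (n + 1), ‖(kacPoly a n ω).coeff k‖ * t ^ k = ‖a k ω‖ * t ^ k :=
    fun k hk => by rw [coeff_kacPoly a (Nat.le_of_lt_succ (Finset.mem_range.mp hk))]
  refine minRootMod_le_of_dominant_coeff (j := j + 1) (natDegree_kacPoly_le a n ω) ht ?_
  rw [coeff_kacPoly a (Nat.zero_le n), coeff_kacPoly a (by omega : j + 1 ≤ n),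
    sum_congr rfl fun k hk => hcoeff k (mem_of_mem_erase hk),
    sum_erase_eq_sub (Finset.mem_range.mpr (by omega)), sum_range_succ', pow_zero, mul_one]
  have hσt' : σ * t ≤ 1 / 2 := by nlinarith
  have hcaps : ∑ i ∈ range n, ‖a (i + 1) ω‖ * t ^ (i + 1) - ‖a (j + 1) ω‖ * t ^ (j + 1)
      ≤ 2 * d.L * t := by
    rw [← sum_erase_eq_sub (Finset.mem_range.mpr hjn)]
    have hLt : 0 ≤ d.L * t := mul_nonneg d.L_nonneg ht.le
    calc ∑ i ∈ (range n).erase j, ‖a (i + 1) ω‖ * t ^ (i + 1)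
        ≤ ∑ i ∈ (range n).erase j, d.L * t * (1 / 2) ^ i := sum_le_sum fun i hi => by
          calc ‖a (i + 1) ω‖ * t ^ (i + 1) ≤ d.L * σ ^ i * t ^ (i + 1) := by
                gcongr; exact hω.2 i hi
            _ = d.L * t * (σ * t) ^ i := by ring
            _ ≤ d.L * t * (1 / 2) ^ i := by gcongr
      _ ≤ ∑ i ∈ range n, d.L * t * (1 / 2) ^ i :=
          sum_le_sum_of_subset_of_nonneg (erase_subset _ _) fun _ _ _ => by positivity
      _ = d.L * t * ∑ i ∈ range n, (1 / 2 : ℝ) ^ i := (mul_sum _ _ _).symm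
      _ ≤ d.L * t * 2 := mul_le_mul_of_nonneg_left (sum_geometric_two_le n) hLt
      _ = 2 * d.L * t := by ring
  have hlead : (r + 2 * d.L) * t ≤ d.v j * t ^ (j + 1) := by
    calc (r + 2 * d.L) * t = (r + 2 * d.L) * (σ ^ 2) ^ j * t ^ (j + 1) := by
          rw [show (r + 2 * d.L) * (σ ^ 2) ^ j * t ^ (j + 1)
            = (r + 2 * d.L) * t * (σ ^ 2 * t) ^ j by ring, hσt, one_pow, mul_one]
      _ ≤ d.v j * t ^ (j + 1) := by gcongr; exact d.margin_le j hj
  have hv : d.v j * t ^ (j + 1) < ‖a (j + 1) ω‖ * t ^ (j + 1) := by gcongr; exact hω.1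
  linarith

variable [MeasurableSpace Ω] {μ : Measure Ω}

theorem measurableSet_dominantEvent {X : ℕ → Ω → ℝ} (hX : ∀ k, Measurable (X k)) (n j : ℕ)
    (v : ℝ) (w : ℕ → ℝ) : MeasurableSet (dominantEvent X n j v w) := by
  simp only [dominantEvent, Set.ofPred_and, Set.ofPred_forall]
  exact (measurableSet_lt measurable_const (hX _)).inter
    (.iInter fun i => .iInter fun _ => measurableSet_le (hX _) measurable_const)

theorem measure_inter_dominantEvent {X : ℕ → Ω → ℝ} (hX : ∀ k, Measurable (X k))
    (hind : iIndepFun X μ) {ν : Measure ℝ} (hlaw : ∀ k, μ.map (X k) = ν) {n j : ℕ}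
    (hj : j < n) (s v : ℝ) (w : ℕ → ℝ) :
    μ ({ω | X 0 ω ≤ s} ∩ dominantEvent X n j v w)
      = ν (Iic s) * (ν (Ioi v) * ∏ i ∈ (range n).erase j, ν (Iic (w i))) := by
  classical
  set B : ℕ → Set ℝ := fun k =>
    if k = 0 then Iic s else if k = j + 1 then Ioi v else Iic (w (k - 1)) with hB
  have hB0 : B 0 = Iic s := rfl
  have hBj : B (j + 1) = Ioi v := by simp [hB]
  have hBi : ∀ i ∈ (range n).erase j, B (i + 1) = Iic (w i) := fun i hi => by
    simp [hB, ne_of_mem_erase hi]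
  have hset :
      {ω | X 0 ω ≤ s} ∩ dominantEvent X n j v w = ⋂ k ∈ range (n + 1), X k ⁻¹' B k := by
    ext ω
    simp only [Set.mem_iInter₂, Set.mem_preimage, Finset.mem_range]
    rw [Nat.forall_lt_succ_left]
    simp only [← Finset.mem_range]
    rw [← (range n).insert_erase (Finset.mem_range.mpr hj), Finset.forall_mem_insert, hB0, hBj]
    simp +contextual only [hBi, dominantEvent, Set.mem_inter_iff, Set.mem_ofPred_eq,
      Set.mem_Iic, Set.mem_Ioi]
  have hlaw' : ∀ k {S : Set ℝ}, MeasurableSet S → μ (X k ⁻¹' S) = ν S := fun k S hS => by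
    rw [← hlaw k, Measure.map_apply (hX k) hS]
  rw [hset, hind.measure_inter_preimage_eq_mul _ fun k _ => by
      simp only [hB]; split_ifs <;> measurability,
    prod_range_succ', mul_comm, ← mul_prod_erase _ _ (Finset.mem_range.mpr hj), hB0, hBj,
    hlaw' 0 measurableSet_Iic, hlaw' _ measurableSet_Ioi, prod_congr rfl fun i hi => by
      rw [hBi i hi, hlaw' _ measurableSet_Iic]]

end DominantEvent

theorem measure_Ioi_eq_ofReal_one_sub_cdf (ν : Measure ℝ) [IsProbabilityMeasure ν] (x : ℝ) :
    ν (Ioi x) = ENNReal.ofReal (1 - cdf ν x) := by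
  rw [← Set.compl_Iic, ← ofReal_measureReal, probReal_compl_eq_one_sub measurableSet_Iic,
    cdf_eq_real]

theorem le_measure_minRootMod_kacPoly_le {Ω : Type*} [MeasurableSpace Ω] {μ : Measure Ω}
    {a : ℕ → Ω → ℂ} (hmeas : ∀ k, Measurable (a k))
    (hindep : iIndepFun a μ) {ν : Measure ℝ} [IsProbabilityMeasure ν]
    (hlaw : ∀ k, μ.map (fun ω => ‖a k ω‖) = ν) {σ r t : ℝ} {n : ℕ} (ht : 0 < t)
    (hσt : σ ^ 2 * t = 1) (hσ : 2 ≤ σ) (d : DominantScale (fun u => 1 - cdf ν u) σ r n) :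
    ENNReal.ofReal ((∑ j ∈ d.J, (1 - cdf ν (d.v j))) / 8) * μ {ω | ‖a 0 ω‖ ≤ r * t / 2}
      ≤ μ {ω | minRootMod (kacPoly a n ω) ≤ t} := by
  set X : ℕ → Ω → ℝ := fun k ω => ‖a k ω‖
  have hX : ∀ k, Measurable (X k) := fun k => (hmeas k).norm
  have hind : iIndepFun X μ := hindep.comp (fun _ => norm) fun _ => measurable_norm
  set A₀ := {ω | X 0 ω ≤ r * t / 2}
  set E : ℕ → Set Ω := fun j => A₀ ∩ dominantEvent X n j (d.v j) fun i => d.L * σ ^ i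
  have hA₀ : μ A₀ = ν (Iic (r * t / 2)) := by
    rw [← hlaw 0, Measure.map_apply (hX 0) measurableSet_Iic]; rfl
  have hE : ∀ j ∈ d.J, ENNReal.ofReal ((1 - cdf ν (d.v j)) / 8) * μ A₀ ≤ μ (E j) := by
    intro j hj
    have hcaps : ENNReal.ofReal (1 / 8) ≤ ∏ i ∈ (range n).erase j, ν (Iic (d.L * σ ^ i)) := by
      simp only [← ofReal_cdf]
      rw [← ENNReal.ofReal_prod_of_nonneg fun _ _ => cdf_nonneg _ _]
      refine ENNReal.ofReal_le_ofReal ?_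
      have := one_sub_sum_le_prod_one_sub ((range n).erase j)
        (x := fun i => 1 - cdf ν (d.L * σ ^ i)) (fun _ _ => sub_nonneg.mpr (cdf_le_one _ _))
        (fun _ _ => sub_le_self _ (cdf_nonneg _ _))
      simp only [sub_sub_cancel] at this
      linarith [d.sum_erase_le j hj]
    rw [measure_inter_dominantEvent hX hind hlaw (Finset.mem_range.mp (d.J_subset hj)),
      ← hA₀, measure_Ioi_eq_ofReal_one_sub_cdf, mul_comm _ (μ A₀), div_eq_mul_one_div,
      ENNReal.ofReal_mul (sub_nonneg.mpr (cdf_le_one _ _))]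
    gcongr
  have hdisj : (d.J : Set ℕ).PairwiseDisjoint E := by
    intro i hi j hj hij
    refine Set.disjoint_left.mpr fun ω hωi hωj => ?_
    have h1 := hωi.2.1
    have h2 := hωj.2.2 i (mem_erase.mpr ⟨hij, d.J_subset hi⟩)
    linarith [d.lt_v i hi]
  have hsub : (⋃ j ∈ d.J, E j) ⊆ {ω | minRootMod (kacPoly a n ω) ≤ t} := by
    simp only [Set.iUnion_subset_iff]
    exact fun j hj ω hω => minRootMod_kacPoly_le_of_mem_dominantEvent d hj ht hσt hσ hω.1 hω.2
  calc ENNReal.ofReal ((∑ j ∈ d.J, (1 - cdf ν (d.v j))) / 8) * μ A₀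
      = ∑ j ∈ d.J, ENNReal.ofReal ((1 - cdf ν (d.v j)) / 8) * μ A₀ := by
        rw [sum_div, ENNReal.ofReal_sum_of_nonneg fun j _ =>
          div_nonneg (sub_nonneg.mpr (cdf_le_one _ _)) (by norm_num), sum_mul]
    _ ≤ ∑ j ∈ d.J, μ (E j) := sum_le_sum hE
    _ = μ (⋃ j ∈ d.J, E j) := (measure_biUnion_finset hdisj fun j _ =>
        (measurableSet_le (hX 0) measurable_const).inter
          (measurableSet_dominantEvent hX n j _ _)).symm
    _ ≤ _ := measure_mono hsub

theorem exists_pos_forall_lt_cdf_lt {ν : Measure ℝ} [IsProbabilityMeasure ν]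
    (h0 : ν (Iic 0) = 0) {ε : ℝ} (hε : 0 < ε) : ∃ M > 0, ∀ u < M, cdf ν u < ε := by
  have hc0 : cdf ν 0 = 0 := by rw [cdf_eq_real, measureReal_def, h0, ENNReal.toReal_zero]
  obtain ⟨M, hM, hMε⟩ := mem_nhdsGE_iff_exists_Ico_subset.mp
    (((cdf ν).right_continuous 0).eventually (gt_mem_nhds (by rwa [hc0])))
  refine ⟨M, hM, fun u hu => ?_⟩
  rcases lt_or_ge u 0 with hu0 | hu0
  · exact (monotone_cdf ν hu0.le).trans_lt (by rwa [hc0])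
  · exact hMε ⟨hu0, hu⟩

theorem minRootMod_lower_tail_bound_general
    {Ω : Type*} [MeasurableSpace Ω] (μ : Measure Ω) [IsProbabilityMeasure μ]
    (a : ℕ → Ω → ℂ) (hmeas : ∀ k, Measurable (a k))
    (hindep : iIndepFun a μ)
    (hid : ∀ k, IdentDistrib (a k) (a 0) μ μ)
    (h0 : μ {ω | a 0 ω = 0} = 0) :
    ∃ C₁ r A : ℝ, 0 < C₁ ∧ 0 < r ∧ 0 < A ∧
      ∀ n : ℕ, 1 ≤ n → ∀ t : ℝ, 0 < t → t < C₁ →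
        ENNReal.ofReal A * μ {ω | ‖a 0 ω‖ ≤ r * t / 2} ≤
          μ {ω | minRootMod (kacPoly a n ω) ≤ t} := by
  set ν := μ.map fun ω => ‖a 0 ω‖
  have : IsProbabilityMeasure ν := Measure.isProbabilityMeasure_map (hmeas 0).norm.aemeasurable
  have hlaw : ∀ k, μ.map (fun ω => ‖a k ω‖) = ν := fun k =>
    ((hid k).comp measurable_norm).map_eq
  have hν0 : ν (Iic 0) = 0 := by
    rw [Measure.map_apply (hmeas 0).norm measurableSet_Iic]
    simpa [Set.preimage, norm_le_zero_iff] using h0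
  obtain ⟨M, hM, hMcdf⟩ := exists_pos_forall_lt_cdf_lt hν0 (by norm_num : (0 : ℝ) < 1 / 2)
  refine ⟨1 / 64 ^ 2, M / 4, 1 / 128, by positivity, by positivity, by positivity,
    fun n hn t ht htC => ?_⟩
  set σ := (√t)⁻¹
  have hσt : σ ^ 2 * t = 1 := by rw [inv_pow, Real.sq_sqrt ht.le, inv_mul_cancel₀ ht.ne']
  have hσ : 64 < σ := by
    rw [lt_inv_comm₀ (by norm_num) (Real.sqrt_pos.mpr ht), Real.sqrt_lt' (by norm_num)]
    linarith
  obtain ⟨d, hd⟩ := exists_dominantScale (G := fun u => 1 - cdf ν u) (n := n)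
    (fun _ _ h => sub_le_sub_left (monotone_cdf ν h) 1)
    (fun _ => sub_nonneg.mpr (cdf_le_one _ _))
    (by simpa using (tendsto_cdf_atTop ν).const_sub 1) hM (fun u hu => by linarith [hMcdf u hu])
    (by omega) hσ
  refine le_trans ?_ (le_measure_minRootMod_kacPoly_le hmeas hindep hlaw ht hσt (by linarith) d)
  gcongr ENNReal.ofReal ?_ * _
  linarith

/-- For i.i.d. complex coefficients with `|a₀|` not a.s. constant and
`ℙ(a₀ = 0) = 0`, there are constants `C₁, r, A > 0` (depending only on the law of `|a₀|`)
such that for every `n ≥ 1` and every `0 < t < C₁`,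
`ℙ(x₁⁽ⁿ⁾ ≤ t) ≥ A · ℙ(|a₀| ≤ r t / 2)`. -/
theorem minRootMod_lower_tail_bound
    {Ω : Type*} [MeasurableSpace Ω] (μ : Measure Ω) [IsProbabilityMeasure μ]
    (a : ℕ → Ω → ℂ) (hmeas : ∀ k, Measurable (a k))
    (hindep : iIndepFun a μ)
    (hid : ∀ k, IdentDistrib (a k) (a 0) μ μ)
    (hnc : ¬ ∃ c : ℝ, 0 ≤ c ∧ μ {ω | ‖a 0 ω‖ = c} = 1)
    (h0 : μ {ω | a 0 ω = 0} = 0) :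
    ∃ C₁ r A : ℝ, 0 < C₁ ∧ 0 < r ∧ 0 < A ∧
      ∀ n : ℕ, 1 ≤ n → ∀ t : ℝ, 0 < t → t < C₁ →
        ENNReal.ofReal A * μ {ω | ‖a 0 ω‖ ≤ r * t / 2} ≤
          μ {ω | minRootMod (kacPoly a n ω) ≤ t} :=
  minRootMod_lower_tail_bound_general μ a hmeas hindep hid h0
end

section
/- Let a_0, a_1, a_2, ... be i.i.d. complex random variables such that |a_0| is not almost surely constant and ℙ(a_0 = 0) = 0. Suppose there exist a real k > 0, a > 0 and δ > 0 such that for all t with 0 < t < δ one has ℙ(|a_0| ≤ t) ≥ a t^k. Then for every integer n ≥ 1, the largest root modulus x_n^(n) of P_n(z) = ∑_{j=0}^n a_j z^j satisfies 𝔼[(x_n^(n))^k] = ∞. -/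
open MeasureTheory ProbabilityTheory Polynomial Filter

namespace Polynomial

theorem norm_le_maxRootMod {p : ℂ[X]} {z : ℂ} (hz : z ∈ p.roots) : ‖z‖ ≤ maxRootMod p :=
  le_csSup ((Multiset.finite_toSet _).image _).bddAbove ⟨z, hz, rfl⟩

theorem maxRootMod_nonneg (p : ℂ[X]) : 0 ≤ maxRootMod p :=
  Real.sSup_nonneg fun _ ⟨_, _, hr⟩ => hr ▸ norm_nonneg _

/-- Vieta: `nextCoeff / leadingCoeff` is minus the sum of the roots. -/
theorem norm_nextCoeff_div_norm_leadingCoeff_le (p : ℂ[X]) :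
    ‖p.nextCoeff‖ / ‖p.leadingCoeff‖ ≤ p.natDegree * maxRootMod p := by
  rcases eq_or_ne p 0 with rfl | hp
  · simp
  have hlc : 0 < ‖p.leadingCoeff‖ := norm_pos_iff.2 (leadingCoeff_ne_zero.2 hp)
  rw [(IsAlgClosed.splits p).nextCoeff_eq_neg_sum_roots_mul_leadingCoeff, norm_mul, norm_neg,
    mul_div_cancel_left₀ _ hlc.ne']
  calc ‖p.roots.sum‖ ≤ (p.roots.map norm).sum := norm_multiset_sum_le _
    _ ≤ (p.roots.map norm).card • maxRootMod p :=
        Multiset.sum_le_card_nsmul _ _ fun _ hx => by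
          obtain ⟨z, hz, rfl⟩ := Multiset.mem_map.1 hx
          exact norm_le_maxRootMod hz
    _ = p.natDegree * maxRootMod p := by
        rw [Multiset.card_map, IsAlgClosed.card_roots_eq_natDegree, nsmul_eq_mul]

end Polynomial

section Kac

variable {Ω : Type*} (a : ℕ → Ω → ℂ) (n : ℕ) (ω : Ω)

theorem kacPoly_coeff (j : ℕ) : (kacPoly a n ω).coeff j = if j ≤ n then a j ω else 0 := by
  simp [kacPoly, coeff_X_pow]

variable {a n ω}

theorem natDegree_kacPoly (h : a n ω ≠ 0) : (kacPoly a n ω).natDegree = n :=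
  natDegree_eq_of_le_of_coeff_ne_zero
    (natDegree_le_iff_coeff_eq_zero.2 fun j hj => by simp [kacPoly_coeff, not_le.2 hj])
    (by simpa [kacPoly_coeff] using h)

theorem leadingCoeff_kacPoly (h : a n ω ≠ 0) : (kacPoly a n ω).leadingCoeff = a n ω := by
  simp [leadingCoeff, natDegree_kacPoly h, kacPoly_coeff]

theorem nextCoeff_kacPoly (h : a n ω ≠ 0) (hn : n ≠ 0) :
    (kacPoly a n ω).nextCoeff = a (n - 1) ω := by
  simp [nextCoeff, natDegree_kacPoly h, hn, kacPoly_coeff]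

theorem norm_div_norm_le_mul_maxRootMod_kacPoly (hn : n ≠ 0) :
    ‖a (n - 1) ω‖ / ‖a n ω‖ ≤ n * maxRootMod (kacPoly a n ω) := by
  rcases eq_or_ne (a n ω) 0 with h | h
  · simpa [h] using mul_nonneg n.cast_nonneg (maxRootMod_nonneg _)
  simpa [nextCoeff_kacPoly h hn, leadingCoeff_kacPoly h, natDegree_kacPoly h]
    using norm_nextCoeff_div_norm_leadingCoeff_le (kacPoly a n ω)

end Kac

theorem lintegral_Ioi_ofReal_inv_eq_top {T : ℝ} (hT : 0 ≤ T) :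
    ∫⁻ t in Set.Ioi T, ENNReal.ofReal t⁻¹ = ⊤ := by
  by_contra h
  refine not_integrableOn_Ioi_inv (a := T) ⟨measurable_inv.aestronglyMeasurable, ?_⟩
  rw [hasFiniteIntegral_iff_ofReal
    (ae_restrict_of_forall_mem measurableSet_Ioi fun t ht => inv_nonneg.2 (hT.trans ht.le))]
  exact lt_top_iff_ne_top.2 h

section Tails

variable {Ω : Type*} [MeasurableSpace Ω] {μ : Measure Ω}

/-- Layer-cake formula, and divergence of `∫ dt / t` at infinity. -/
theorem lintegral_ofReal_eq_top_of_tail {f : Ω → ℝ} (hf_nn : 0 ≤ᵐ[μ] f) (hf : AEMeasurable f μ)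
    {C T : ℝ} (hC : 0 < C) (hT : 0 ≤ T)
    (htail : ∀ t, T < t → ENNReal.ofReal (C / t) ≤ μ {ω | t ≤ f ω}) :
    ∫⁻ ω, ENNReal.ofReal (f ω) ∂μ = ⊤ := by
  refine top_le_iff.1 ?_
  calc ⊤ = ENNReal.ofReal C * ∫⁻ t in Set.Ioi T, ENNReal.ofReal t⁻¹ := by
        rw [lintegral_Ioi_ofReal_inv_eq_top hT, ENNReal.mul_top (ENNReal.ofReal_pos.2 hC).ne']
    _ = ∫⁻ t in Set.Ioi T, ENNReal.ofReal (C / t) := by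
        rw [← lintegral_const_mul' _ _ ENNReal.ofReal_ne_top]
        simp_rw [div_eq_mul_inv, ENNReal.ofReal_mul hC.le]
    _ ≤ ∫⁻ t in Set.Ioi T, μ {ω | t ≤ f ω} :=
        setLIntegral_mono' measurableSet_Ioi htail
    _ ≤ ∫⁻ t in Set.Ioi 0, μ {ω | t ≤ f ω} := lintegral_mono_set (Set.Ioi_subset_Ioi hT)
    _ = ∫⁻ ω, ENNReal.ofReal (f ω) ∂μ := (lintegral_eq_lintegral_meas_le μ hf_nn hf).symm

variable {E : Type*} [NormedAddCommGroup E] [MeasurableSpace E] [OpensMeasurableSpace E]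

/-- The substitution `s = t^(-1/k)` turns the small-ball bound into `ℙ(‖X‖⁻ᵏ ≥ t) ≥ c / t`. -/
theorem lintegral_norm_rpow_neg_eq_top {X : Ω → E} (hX : AEMeasurable X μ)
    (h0 : μ {ω | X ω = 0} = 0) {k c δ : ℝ} (hk : 0 < k) (hc : 0 < c) (hδ : 0 < δ)
    (htail : ∀ s : ℝ, 0 < s → s < δ → ENNReal.ofReal (c * s ^ k) ≤ μ {ω | ‖X ω‖ ≤ s}) :
    ∫⁻ ω, ENNReal.ofReal (‖X ω‖ ^ (-k)) ∂μ = ⊤ := by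
  refine lintegral_ofReal_eq_top_of_tail (ae_of_all _ fun ω => Real.rpow_nonneg (norm_nonneg _) _)
    (hX.norm.pow_const _) hc (Real.rpow_nonneg hδ.le (-k)) fun t ht => ?_
  have ht0 : 0 < t := (Real.rpow_pos_of_pos hδ _).trans ht
  set s := t ^ (-k⁻¹) with hs
  have hs0 : 0 < s := Real.rpow_pos_of_pos ht0 _
  have hsδ : s < δ := by
    have := Real.rpow_lt_rpow_of_neg (Real.rpow_pos_of_pos hδ _) ht (neg_lt_zero.2 (inv_pos.2 hk))
    rwa [← Real.rpow_mul hδ.le, neg_mul_neg, mul_inv_cancel₀ hk.ne', Real.rpow_one] at this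
  have hsk : s ^ k = t⁻¹ := by
    rw [hs, ← Real.rpow_mul ht0.le, neg_mul, inv_mul_cancel₀ hk.ne', Real.rpow_neg_one]
  have hsub : {ω | ‖X ω‖ ≤ s} ⊆ {ω | t ≤ ‖X ω‖ ^ (-k)} ∪ {ω | X ω = 0} := by
    intro ω hω
    refine or_iff_not_imp_right.2 fun hX0 => ?_
    calc t = s ^ (-k) := by rw [Real.rpow_neg hs0.le, hsk, inv_inv]
      _ ≤ ‖X ω‖ ^ (-k) :=
        Real.rpow_le_rpow_of_nonpos (norm_pos_iff.2 hX0) hω (neg_nonpos.2 hk.le)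
  calc ENNReal.ofReal (c / t) = ENNReal.ofReal (c * s ^ k) := by rw [hsk, div_eq_mul_inv]
    _ ≤ μ {ω | ‖X ω‖ ≤ s} := htail s hs0 hsδ
    _ ≤ μ {ω | t ≤ ‖X ω‖ ^ (-k)} :=
        (measure_mono hsub).trans ((measure_union_le _ _).trans (by rw [h0, add_zero]))

theorem lintegral_norm_div_norm_rpow_eq_top [NeZero μ] {X Y : Ω → E} (hXY : IndepFun X Y μ)
    (hX : Measurable X) (hY : Measurable Y) (hX0 : μ {ω | X ω = 0} = 0) {k : ℝ}
    (hY_top : ∫⁻ ω, ENNReal.ofReal (‖Y ω‖ ^ (-k)) ∂μ = ⊤) :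
    ∫⁻ ω, ENNReal.ofReal ((‖X ω‖ / ‖Y ω‖) ^ k) ∂μ = ⊤ := by
  have hφ : Measurable fun z : E => ENNReal.ofReal (‖z‖ ^ k) :=
    (measurable_norm.pow_const k).ennreal_ofReal
  have hψ : Measurable fun z : E => ENNReal.ofReal (‖z‖ ^ (-k)) :=
    (measurable_norm.pow_const (-k)).ennreal_ofReal
  have hX_pos : ∫⁻ ω, ENNReal.ofReal (‖X ω‖ ^ k) ∂μ ≠ 0 := by
    rw [Ne, lintegral_eq_zero_iff (f := fun ω => ENNReal.ofReal (‖X ω‖ ^ k)) (hφ.comp hX)]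
    intro h
    obtain ⟨ω, hω, hXω⟩ := (h.and (ae_iff.2 (by simpa using hX0) : ∀ᵐ ω ∂μ, X ω ≠ 0)).exists
    exact (ENNReal.ofReal_pos.2 (Real.rpow_pos_of_pos (norm_pos_iff.2 hXω) k)).ne' hω
  calc ∫⁻ ω, ENNReal.ofReal ((‖X ω‖ / ‖Y ω‖) ^ k) ∂μ
      = ∫⁻ ω, ENNReal.ofReal (‖X ω‖ ^ k) * ENNReal.ofReal (‖Y ω‖ ^ (-k)) ∂μ := by
        refine lintegral_congr fun ω => ?_
        rw [Real.div_rpow (norm_nonneg _) (norm_nonneg _), Real.rpow_neg (norm_nonneg _),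
          div_eq_mul_inv, ENNReal.ofReal_mul (Real.rpow_nonneg (norm_nonneg _) _)]
    _ = (∫⁻ ω, ENNReal.ofReal (‖X ω‖ ^ k) ∂μ) * ∫⁻ ω, ENNReal.ofReal (‖Y ω‖ ^ (-k)) ∂μ :=
        lintegral_mul_eq_lintegral_mul_lintegral_of_indepFun'' (hφ.comp hX).aemeasurable
          (hψ.comp hY).aemeasurable (hXY.comp hφ hψ)
    _ = ⊤ := by rw [hY_top, ENNReal.mul_top hX_pos]

end Tails

theorem maxRootMod_rpow_integral_eq_top_general
    {Ω : Type*} [MeasurableSpace Ω] (μ : Measure Ω) [IsProbabilityMeasure μ]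
    (a : ℕ → Ω → ℂ) (hmeas : ∀ k, Measurable (a k))
    (hindep : iIndepFun a μ)
    (hid : ∀ k, IdentDistrib (a k) (a 0) μ μ)
    (h0 : μ {ω | a 0 ω = 0} = 0)
    (k c δ : ℝ) (hk : 0 < k) (hc : 0 < c) (hδ : 0 < δ)
    (htail : ∀ t : ℝ, 0 < t → t < δ →
      ENNReal.ofReal (c * t ^ k) ≤ μ {ω | ‖a 0 ω‖ ≤ t}) :
    ∀ n : ℕ, 1 ≤ n →
      ∫⁻ ω, ENNReal.ofReal (maxRootMod (kacPoly a n ω) ^ k) ∂μ = ⊤ := by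
  intro n hn
  have hnull : μ {ω | a (n - 1) ω = 0} = 0 :=
    ((hid _).measure_mem_eq (measurableSet_singleton 0)).trans h0
  have hleading : ∫⁻ ω, ENNReal.ofReal (‖a n ω‖ ^ (-k)) ∂μ = ⊤ :=
    ((hid n).comp (measurable_norm.pow_const (-k)).ennreal_ofReal).lintegral_eq.trans
      (lintegral_norm_rpow_neg_eq_top (hmeas 0).aemeasurable h0 hk hc hδ htail)
  have hratio := lintegral_norm_div_norm_rpow_eq_top (hindep.indepFun (by omega : n - 1 ≠ n))
    (hmeas _) (hmeas _) hnull hleading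
  have hbound (ω : Ω) : ENNReal.ofReal ((‖a (n - 1) ω‖ / ‖a n ω‖) ^ k) ≤
      ENNReal.ofReal ((n : ℝ) ^ k) * ENNReal.ofReal (maxRootMod (kacPoly a n ω) ^ k) := by
    rw [← ENNReal.ofReal_mul (Real.rpow_nonneg n.cast_nonneg _),
      ← Real.mul_rpow n.cast_nonneg (maxRootMod_nonneg _)]
    exact ENNReal.ofReal_le_ofReal (Real.rpow_le_rpow (by positivity)
      (norm_div_norm_le_mul_maxRootMod_kacPoly (by omega)) hk.le)
  have htop : ⊤ ≤ ENNReal.ofReal ((n : ℝ) ^ k) *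
      ∫⁻ ω, ENNReal.ofReal (maxRootMod (kacPoly a n ω) ^ k) ∂μ :=
    calc ⊤ = ∫⁻ ω, ENNReal.ofReal ((‖a (n - 1) ω‖ / ‖a n ω‖) ^ k) ∂μ := hratio.symm
      _ ≤ _ := lintegral_mono hbound
      _ = _ := lintegral_const_mul' _ _ ENNReal.ofReal_ne_top
  exact ((ENNReal.mul_eq_top.1 (top_le_iff.1 htop)).resolve_right
    fun h => ENNReal.ofReal_ne_top h.1).2

/-- For i.i.d. complex coefficients with `|a₀|` not a.s. constant and
`ℙ(a₀ = 0) = 0`, if `ℙ(|a₀| ≤ t) ≥ c tᵏ` for all `0 < t < δ` (with `k, c, δ > 0`), then for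
every `n ≥ 1` the largest root modulus `xₙ⁽ⁿ⁾` of `P_n` satisfies `𝔼[(xₙ⁽ⁿ⁾)ᵏ] = ∞`. -/
theorem maxRootMod_rpow_integral_eq_top
    {Ω : Type*} [MeasurableSpace Ω] (μ : Measure Ω) [IsProbabilityMeasure μ]
    (a : ℕ → Ω → ℂ) (hmeas : ∀ k, Measurable (a k))
    (hindep : iIndepFun a μ)
    (hid : ∀ k, IdentDistrib (a k) (a 0) μ μ)
    (hnc : ¬ ∃ c : ℝ, 0 ≤ c ∧ μ {ω | ‖a 0 ω‖ = c} = 1)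
    (h0 : μ {ω | a 0 ω = 0} = 0)
    (k c δ : ℝ) (hk : 0 < k) (hc : 0 < c) (hδ : 0 < δ)
    (htail : ∀ t : ℝ, 0 < t → t < δ →
      ENNReal.ofReal (c * t ^ k) ≤ μ {ω | ‖a 0 ω‖ ≤ t}) :
    ∀ n : ℕ, 1 ≤ n →
      ∫⁻ ω, ENNReal.ofReal (maxRootMod (kacPoly a n ω) ^ k) ∂μ = ⊤ :=
  maxRootMod_rpow_integral_eq_top_general μ a hmeas hindep hid h0 k c δ hk hc hδ htail
end

section
/- Let (a_k)_{k∈ℕ} be i.i.d. complex random variables and let ε > 0. If almost surely sup_{k∈ℕ} |a_k| e^{-εk} < ∞, then 𝔼[log(1 + |a_0|)] < ∞. -/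
open MeasureTheory ProbabilityTheory Filter Real
open scoped ENNReal

/-!
If `𝔼[log (1 + |a₀|)] = ∞`, then `∑ₖ ℙ(log (1 + |a₀|) > 2εk) = ∞`. By identical distribution this is
`∑ₖ ℙ(log (1 + |aₖ|) > 2εk)`, so by independence and the second Borel–Cantelli lemma almost surely
`|aₖ| > e^{2εk} - 1` for infinitely many `k`. Along those `k` the quantity `|aₖ| e^{-εk}` is unbounded.
-/

lemma ofReal_le_mul_tsum_indicator_lt {Ω : Type*} {X : Ω → ℝ} {c : ℝ} (hc : 0 < c) (ω : Ω) :
    ENNReal.ofReal (X ω) ≤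
      ENNReal.ofReal c * ∑' n : ℕ, {ω | c * n < X ω}.indicator 1 ω := by
  set m := ⌈X ω / c⌉₊
  have hX_le : X ω ≤ c * m := (div_le_iff₀' hc).1 (Nat.le_ceil _)
  have hmem : ∀ n ∈ Finset.range m, ω ∈ {ω | c * n < X ω} := fun n hn =>
    (lt_div_iff₀' hc).1 (Nat.lt_ceil.1 (Finset.mem_range.1 hn))
  calc ENNReal.ofReal (X ω) ≤ ENNReal.ofReal (c * m) := ENNReal.ofReal_le_ofReal hX_le
    _ = ENNReal.ofReal c * ∑ n ∈ Finset.range m, {ω | c * n < X ω}.indicator 1 ω := by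
      rw [Finset.sum_congr rfl fun n hn => Set.indicator_of_mem (hmem n hn) _,
        ENNReal.ofReal_mul hc.le]
      simp
    _ ≤ _ := by gcongr; exact ENNReal.sum_le_tsum _

section LayerCake

variable {Ω : Type*} [MeasurableSpace Ω] {μ : Measure Ω}

lemma lintegral_ofReal_le_mul_tsum_measure_lt {X : Ω → ℝ} (hX : Measurable X) {c : ℝ}
    (hc : 0 < c) :
    ∫⁻ ω, ENNReal.ofReal (X ω) ∂μ ≤ ENNReal.ofReal c * ∑' n : ℕ, μ {ω | c * n < X ω} := by
  have hmeas : ∀ n : ℕ, MeasurableSet {ω | c * n < X ω} := fun _ =>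
    measurableSet_lt measurable_const hX
  calc ∫⁻ ω, ENNReal.ofReal (X ω) ∂μ
      ≤ ∫⁻ ω, ENNReal.ofReal c * ∑' n : ℕ, {ω | c * n < X ω}.indicator 1 ω ∂μ :=
        lintegral_mono (ofReal_le_mul_tsum_indicator_lt hc)
    _ = ENNReal.ofReal c * ∑' n : ℕ, μ {ω | c * n < X ω} := by
      rw [lintegral_const_mul' _ _ ENNReal.ofReal_ne_top,
        lintegral_tsum fun n => (measurable_one.indicator (hmeas n)).aemeasurable]
      simp only [lintegral_indicator_one (hmeas _)]

lemma integrable_of_tsum_measure_lt_ne_top {X : Ω → ℝ} (hX : Measurable X) (hX₀ : 0 ≤ X)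
    {c : ℝ} (hc : 0 < c) (hsum : ∑' n : ℕ, μ {ω | c * n < X ω} ≠ ∞) : Integrable X μ := by
  refine ⟨hX.aestronglyMeasurable, ?_⟩
  rw [hasFiniteIntegral_iff_ofReal (ae_of_all _ hX₀)]
  exact (lintegral_ofReal_le_mul_tsum_measure_lt hX hc).trans_lt
    (ENNReal.mul_lt_top ENNReal.ofReal_lt_top hsum.lt_top)

end LayerCake

theorem ProbabilityTheory.iIndepFun.ae_frequently_mem_of_tsum_eq_top {Ω β : Type*}
    [MeasurableSpace Ω] [MeasurableSpace β] {μ : Measure Ω} {f : ℕ → Ω → β}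
    (hf : ∀ n, Measurable (f n)) (hindep : iIndepFun f μ) {B : ℕ → Set β}
    (hB : ∀ n, MeasurableSet (B n)) (hsum : ∑' n, μ (f n ⁻¹' B n) = ∞) :
    ∀ᵐ ω ∂μ, ∃ᶠ n in atTop, f n ω ∈ B n := by
  have := hindep.isProbabilityMeasure
  have hmeas : ∀ n, MeasurableSet (f n ⁻¹' B n) := fun n => hf n (hB n)
  have hsets : iIndepSet (fun n => f n ⁻¹' B n) μ :=
    (iIndepSet_iff_meas_biInter hmeas).2 fun S =>
      hindep.measure_inter_preimage_eq_mul S fun n _ => hB n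
  have hlimsup := measure_limsup_eq_one hmeas hsets hsum
  rw [← prob_compl_eq_zero_iff (MeasurableSet.measurableSet_limsup hmeas)] at hlimsup
  filter_upwards [measure_eq_zero_iff_ae_notMem.1 hlimsup] with ω hω
  exact mem_limsup_iff_frequently_mem.1 (not_not.1 hω)

lemma eventually_log_one_add_norm_le_of_bddAbove {E : Type*} [SeminormedAddGroup E]
    {z : ℕ → E} {ε : ℝ} (hε : 0 < ε)
    (hz : BddAbove (Set.range fun k : ℕ => ‖z k‖ * exp (-(ε * k)))) :
    ∀ᶠ k : ℕ in atTop, log (1 + ‖z k‖) ≤ 2 * ε * k := by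
  obtain ⟨C, hC⟩ := hz
  have hbound : ∀ k : ℕ, ‖z k‖ ≤ C * exp (ε * k) := fun k => by
    rw [← div_le_iff₀ (exp_pos _), div_eq_mul_inv, ← exp_neg]
    exact hC (Set.mem_range_self k)
  have hC₀ : 0 ≤ C := by simpa using (norm_nonneg (z 0)).trans (hbound 0)
  have hgrowth : Tendsto (fun k : ℕ => exp (ε * k)) atTop atTop :=
    tendsto_exp_atTop.comp (tendsto_natCast_atTop_atTop.const_mul_atTop hε)
  filter_upwards [hgrowth.eventually_ge_atTop (C + 1)] with k hk
  -- `1 + C e^{εk} ≤ (C + 1) e^{εk} ≤ e^{2εk}` once `e^{εk} ≥ C + 1 ≥ 1`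
  have hexp : 1 + ‖z k‖ ≤ exp (2 * ε * k) := by
    have hsq : exp (2 * ε * k) = exp (ε * k) * exp (ε * k) := by rw [← exp_add]; ring_nf
    nlinarith [hbound k]
  calc log (1 + ‖z k‖) ≤ log (exp (2 * ε * k)) := log_le_log (by positivity) hexp
    _ = 2 * ε * k := log_exp _

theorem integrable_log_of_ae_bddAbove_general
    {Ω : Type*} [MeasurableSpace Ω] (μ : Measure Ω)
    (a : ℕ → Ω → ℂ) (hmeas : ∀ k, Measurable (a k))
    (hindep : iIndepFun a μ)
    (hid : ∀ k, IdentDistrib (a k) (a 0) μ μ)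
    (ε : ℝ) (hε : 0 < ε)
    (hbdd : ∀ᵐ ω ∂μ, BddAbove
      (Set.range fun k : ℕ => ‖a k ω‖ * Real.exp (-(ε * k)))) :
    Integrable (fun ω => Real.log (1 + ‖a 0 ω‖)) μ := by
  have := hindep.isProbabilityMeasure
  have hlog : Measurable fun z : ℂ => log (1 + ‖z‖) := by fun_prop
  let B : ℕ → Set ℂ := fun k => {z | 2 * ε * k < log (1 + ‖z‖)}
  have hB : ∀ k, MeasurableSet (B k) := fun _ => measurableSet_lt measurable_const hlog
  refine integrable_of_tsum_measure_lt_ne_top (hlog.comp (hmeas 0))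
    (fun ω => log_nonneg (by simp)) (by positivity : 0 < 2 * ε) fun htop => ?_
  have hsum : ∑' k, μ (a k ⁻¹' B k) = ∞ := by
    simp only [(hid _).measure_mem_eq (hB _)]
    exact htop
  obtain ⟨ω, hfreq, hbddω⟩ :=
    ((hindep.ae_frequently_mem_of_tsum_eq_top hmeas hB hsum).and hbdd).exists
  obtain ⟨k, hlarge, hsmall⟩ :=
    (hfreq.and_eventually (eventually_log_one_add_norm_le_of_bddAbove hε hbddω)).exists
  exact hsmall.not_gt hlarge

/-- For i.i.d. complex random variables and `ε > 0`, if almost surely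
`sup_k |a_k| e^{-εk} < ∞`, then `𝔼[log(1+|a₀|)] < ∞`. -/
theorem integrable_log_of_ae_bddAbove
    {Ω : Type*} [MeasurableSpace Ω] (μ : Measure Ω) [IsProbabilityMeasure μ]
    (a : ℕ → Ω → ℂ) (hmeas : ∀ k, Measurable (a k))
    (hindep : iIndepFun a μ)
    (hid : ∀ k, IdentDistrib (a k) (a 0) μ μ)
    (ε : ℝ) (hε : 0 < ε)
    (hbdd : ∀ᵐ ω ∂μ, BddAbove
      (Set.range fun k : ℕ => ‖a k ω‖ * Real.exp (-(ε * k)))) :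
    Integrable (fun ω => Real.log (1 + ‖a 0 ω‖)) μ :=
  integrable_log_of_ae_bddAbove_general μ a hmeas hindep hid ε hε hbdd
end
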